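/- Let U ∈ Z^d with M ≤ |U|_∞, set η := U/|U| (an ℓ2-unit vector) and m := ⌊|U|⌋. Then for all large m there exists a constant C9 > 0 (depending only on ν, d, α, δ and κ) such that E[T(0,U)] ≤ E[T_σ(D_m(0), D_m(mη))] + C̃3·m·exp(−C̃4·m^δ) + C9·m^{dδ}, where C̃3, C̃4 are the constants for which |E[T(D_m(0),D_m(mη))] − E[T_σ(D_m(0),D_m(mη))]| ≤ C̃3·m·exp(−C̃4·m^δ). -/

import Mathlib

open MeasureTheory ProbabilityTheory Filter Real Set

namespace FPP

/-- Vertices of the `d`-dimensional cubic lattice. -/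
abbrev V (d : ℕ) := Fin d → ℤ

/-- A configuration of edge weights (indexed by unordered pairs of vertices). -/
abbrev Cfg (d : ℕ) := Sym2 (V d) → ℝ

/-- Nearest-neighbour adjacency on `ℤ^d`. -/
def adj {d : ℕ} (x y : V d) : Prop := ∑ i, |x i - y i| = 1

/-- `*`-adjacency: distinct points at `ℓ∞`-distance one. -/
def adjStar {d : ℕ} (x y : V d) : Prop := x ≠ y ∧ ∀ i, |x i - y i| ≤ 1

/-- `e` is an edge of the lattice `ℤ^d`. -/
def IsEdge {d : ℕ} (e : Sym2 (V d)) : Prop := ∃ x y, adj x y ∧ e = s(x, y)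

/-- The passage time of a path (a list of vertices). -/
def pathCost {d : ℕ} (w : Cfg d) : List (V d) → ℝ
  | [] => 0
  | [_] => 0
  | x :: y :: rest => w s(x, y) + pathCost w (y :: rest)

/-- `γ` starts in `A` and ends in `B`. -/
def connects {d : ℕ} (γ : List (V d)) (A B : Set (V d)) : Prop :=
  (∃ a ∈ A, γ.head? = some a) ∧ (∃ b ∈ B, γ.getLast? = some b)

/-- First passage time between two sets of vertices. -/
noncomputable def fpt {d : ℕ} (w : Cfg d) (A B : Set (V d)) : ℝ :=
  sInf {t | ∃ γ : List (V d), γ.Chain' adj ∧ connects γ A B ∧ pathCost w γ = t}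

/-- Point-to-point first passage time. -/
noncomputable def pt {d : ℕ} (w : Cfg d) (x y : V d) : ℝ := fpt w {x} {y}

/-- A lattice point `[x]` within `ℓ∞`-distance `1/2` of `x ∈ ℝ^d`. -/
noncomputable def rd {d : ℕ} (x : Fin d → ℝ) : V d := fun i => round (x i)

/-- `a_{0,n}(ξ) = T(0, nξ)`. -/
noncomputable def aT {d : ℕ} (w : Cfg d) (n : ℕ) (ξ : Fin d → ℝ) : ℝ :=
  pt w 0 (rd ((n : ℝ) • ξ))

/-- `ξ` is an `ℓ2`-unit vector. -/
def unitVec {d : ℕ} (ξ : Fin d → ℝ) : Prop := ∑ i, ξ i ^ 2 = 1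

/-- The open cluster of `x` in a bond configuration `η`. -/
def openCluster {d : ℕ} (η : Sym2 (V d) → Bool) (x : V d) : Set (V d) :=
  {y | ∃ γ : List (V d), γ.Chain' (fun a b => adj a b ∧ η s(a, b) = true) ∧
        γ.head? = some x ∧ γ.getLast? = some y}

/-- `Q` is an i.i.d. Bernoulli(`p`) bond percolation measure on `ℤ^d`. -/
def BernoulliIID (d : ℕ) (Q : Measure (Sym2 (V d) → Bool)) (p : ℝ) : Prop :=
  IsProbabilityMeasure Q ∧
  (∀ e : Sym2 (V d), IsEdge e → (Q {η | η e = true}).toReal = p) ∧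
  iIndepFun (fun (e : {e : Sym2 (V d) // IsEdge e}) η => η e.1) Q

/-- The critical probability of i.i.d. bond percolation on `ℤ^d`. -/
noncomputable def pc (d : ℕ) : ℝ :=
  sSup {p : ℝ | p ∈ Icc (0 : ℝ) 1 ∧
    ∀ Q : Measure (Sym2 (V d) → Bool), BernoulliIID d Q p →
      Q {η | (openCluster η 0).Infinite} = 0}

/-- `P` makes the edge weights i.i.d. with common law `ν`. -/
def IID (d : ℕ) (P : Measure (Cfg d)) (ν : Measure ℝ) : Prop :=
  IsProbabilityMeasure P ∧
  (∀ e : Sym2 (V d), IsEdge e → P.map (fun w => w e) = ν) ∧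
  iIndepFun (fun (e : {e : Sym2 (V d) // IsEdge e}) w => w e.1) P

/-- The site `x` is unhealthy: some adjacent edge has weight `> κ⁻¹`. -/
def unhealthy {d : ℕ} (κ : ℝ) (w : Cfg d) (x : V d) : Prop :=
  ∃ y, adj x y ∧ κ⁻¹ < w s(x, y)

/-- The bad nearest-neighbour cluster `C₋(x)`: sites joined to `x` by paths all of
whose edges are bad (weight `< κ`). -/
def badCluster {d : ℕ} (κ : ℝ) (w : Cfg d) (x : V d) : Set (V d) :=
  {y | ∃ γ : List (V d), γ.Chain' (fun a b => adj a b ∧ w s(a, b) < κ) ∧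
        γ.head? = some x ∧ γ.getLast? = some y}

/-- The unhealthy `*`-connected cluster `C₊(x)`. -/
def unhealthyCluster {d : ℕ} (κ : ℝ) (w : Cfg d) (x : V d) : Set (V d) :=
  {y | ∃ γ : List (V d), γ.Chain' adjStar ∧ (∀ v ∈ γ, unhealthy κ w v) ∧
        γ.head? = some x ∧ γ.getLast? = some y}

/-- `s` has fewer than `r` vertices. -/
def smallSet {d : ℕ} (s : Set (V d)) (r : ℝ) : Prop := s.Finite ∧ (s.ncard : ℝ) < r

open Classical in
/-- The truncated weights `σ` (with cutoff `κ` and cluster-size threshold `r`). -/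
noncomputable def tw {d : ℕ} (κ r : ℝ) (w : Cfg d) : Cfg d := fun e =>
  if (κ ≤ w e ∧ w e ≤ κ⁻¹)
      ∨ (w e < κ ∧ ∃ x ∈ e, smallSet (badCluster κ w x) r)
      ∨ (κ⁻¹ < w e ∧ ∃ x ∈ e, smallSet (unhealthyCluster κ w x) r)
    then w e else 1

/-- The box `D_n(c) = c + [-3^d κ⁻¹ n^δ, 3^d κ⁻¹ n^δ]^d` (as a set of lattice points). -/
def Dbox {d : ℕ} (κ δ : ℝ) (n : ℕ) (c : Fin d → ℝ) : Set (V d) :=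
  {v | ∀ i, |(v i : ℝ) - c i| ≤ 3 ^ d * κ⁻¹ * (n : ℝ) ^ δ}

/-- `|U|_∞ = M`. -/
def linfEqM {d : ℕ} (U : V d) (M : ℕ) : Prop :=
  (∀ i, |U i| ≤ (M : ℤ)) ∧ ∃ i, |U i| = (M : ℤ)

/-- Kesten's quantity `Λ(M, n)`. -/
noncomputable def Lam {d : ℕ} (P : Measure (Cfg d)) (ξ : Fin d → ℝ) (μ : ℝ) (M n : ℕ) : ℝ :=
  sInf {t | ∃ p : V d → ℕ, (Function.support p).Finite ∧
        (∀ U, p U ≠ 0 → linfEqM U M) ∧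
        (∀ i, |((∑ᶠ U, p U • U) i : ℝ) - (n : ℝ) * ξ i| ≤ (M : ℝ)) ∧
        t = ∑ᶠ U, (p U : ℝ) * ∫ w, pt w 0 U ∂P} - (n : ℝ) * μ

/-!
Since `U` lies in `D_m(mη)`, a path from `0` to `U` is obtained from any path between the boxes
`D_m(0)` and `D_m(mη)` by attaching at each end a coordinate-monotone path inside the box. A
monotone path is self-avoiding, so its passage time is at most the total weight of the edges of
its box. Hence `T(0, U) ≤ T(D_m(0), D_m(mη))` plus the edge weights of both boxes, whose
expectation is `O(m^{dδ})` since a box has `O(m^{dδ})` edges; the comparison hypothesis then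
replaces `T` by `T_σ` at the cost of `C̃₃ m exp(-C̃₄ m^δ)`.
-/

variable {d : ℕ}

section Paths

lemma pathCost_append_cons (w : Cfg d) (x : V d) (r : List (V d)) :
    ∀ l : List (V d), pathCost w (l ++ x :: r) = pathCost w (l ++ [x]) + pathCost w (x :: r)
  | [] => by simp [pathCost]
  | [a] => by simp [pathCost]
  | a :: b :: l => by
    show w s(a, b) + pathCost w ((b :: l) ++ x :: r) = w s(a, b) + pathCost w ((b :: l) ++ [x]) + _
    rw [pathCost_append_cons w x r (b :: l)]
    ring

lemma exists_isChain_append (w : Cfg d) {γ₁ γ₂ : List (V d)} {x : V d}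
    (h₁ : γ₁.getLast? = some x) (h₂ : γ₂.head? = some x)
    (c₁ : γ₁.IsChain adj) (c₂ : γ₂.IsChain adj) :
    ∃ γ : List (V d), γ.IsChain adj ∧ γ.head? = γ₁.head? ∧ γ.getLast? = γ₂.getLast? ∧
      pathCost w γ = pathCost w γ₁ + pathCost w γ₂ := by
  obtain ⟨l, rfl⟩ := List.getLast?_eq_some_iff.1 h₁
  obtain ⟨r, rfl⟩ := List.head?_eq_some_iff.1 h₂
  refine ⟨l ++ x :: r, ?_, ?_, by simp [List.getLast?_eq_some_getLast (List.cons_ne_nil x r)],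
    pathCost_append_cons w x r l⟩
  · simpa using c₁.append_overlap (l₃ := r) (by simpa using c₂) (List.cons_ne_nil x [])
  · cases l <;> simp

lemma pathCost_nonneg {w : Cfg d} (hw : ∀ e, IsEdge e → 0 ≤ w e) :
    ∀ γ : List (V d), γ.IsChain adj → 0 ≤ pathCost w γ
  | [], _ => le_rfl
  | [_], _ => le_rfl
  | x :: y :: r, h => by
    obtain ⟨hxy, h⟩ := List.isChain_cons_cons.1 h
    exact add_nonneg (hw _ ⟨x, y, hxy, rfl⟩) (pathCost_nonneg hw (y :: r) h)

def edgeList : List (V d) → List (Sym2 (V d))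
  | [] => []
  | [_] => []
  | x :: y :: r => s(x, y) :: edgeList (y :: r)

lemma pathCost_eq_sum_edgeList (w : Cfg d) :
    ∀ γ : List (V d), pathCost w γ = ((edgeList γ).map w).sum
  | [] => rfl
  | [_] => rfl
  | x :: y :: r => by
    rw [pathCost, edgeList, List.map_cons, List.sum_cons, pathCost_eq_sum_edgeList w (y :: r)]

lemma exists_infix_of_mem_edgeList {e : Sym2 (V d)} :
    ∀ {γ : List (V d)}, e ∈ edgeList γ → ∃ u v, [u, v] <:+: γ ∧ e = s(u, v)
  | [], he | [_], he => by simp [edgeList] at he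
  | x :: y :: r, he => by
    rcases List.mem_cons.1 he with rfl | he
    · exact ⟨x, y, ⟨[], r, rfl⟩, rfl⟩
    · obtain ⟨u, v, huv, rfl⟩ := exists_infix_of_mem_edgeList he
      exact ⟨u, v, List.infix_cons huv, rfl⟩

lemma nodup_edgeList : ∀ {γ : List (V d)}, γ.Nodup → (edgeList γ).Nodup
  | [], _ | [_], _ => List.nodup_nil
  | x :: y :: r, h => by
    obtain ⟨hx, h⟩ := List.nodup_cons.1 h
    refine List.nodup_cons.2 ⟨fun hmem => ?_, nodup_edgeList h⟩
    obtain ⟨u, v, huv, heq⟩ := exists_infix_of_mem_edgeList hmem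
    rcases Sym2.mem_iff.1 (heq ▸ Sym2.mem_mk_left x y) with rfl | rfl <;>
      exact hx (huv.subset (by simp))

lemma pathCost_le_sum_of_subset {w : Cfg d} {F : Finset (Sym2 (V d))} (hw : ∀ e ∈ F, 0 ≤ w e)
    {γ : List (V d)} (hnd : γ.Nodup) (hF : ∀ e ∈ edgeList γ, e ∈ F) :
    pathCost w γ ≤ ∑ e ∈ F, w e := by
  rw [pathCost_eq_sum_edgeList, ← List.sum_toFinset w (nodup_edgeList hnd)]
  exact Finset.sum_le_sum_of_subset_of_nonneg (fun e he => hF e (List.mem_toFinset.1 he))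
    fun e he _ => hw e he

end Paths

section LatticeGeometry

lemma adj_update {v : V d} {i : Fin d} {t : ℤ} (h : |v i - t| = 1) :
    adj v (Function.update v i t) := by
  unfold adj
  rw [Finset.sum_eq_single i (fun j _ hj => by simp [Function.update_of_ne hj]) (by simp)]
  simpa using h

lemma exists_abs_sub_eq_one_of_adj {x y : V d} (h : adj x y) :
    ∃ i, |x i - y i| = 1 ∧ ∀ j ≠ i, x j = y j := by
  unfold adj at h
  obtain ⟨i, hi⟩ : ∃ i, x i ≠ y i := by
    by_contra! hxy
    simp [hxy] at h
  have hsplit := Finset.add_sum_erase Finset.univ (fun j => |x j - y j|) (Finset.mem_univ i)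
  have hrest : 0 ≤ ∑ j ∈ Finset.univ.erase i, |x j - y j| :=
    Finset.sum_nonneg fun _ _ => abs_nonneg _
  have hi1 : 1 ≤ |x i - y i| := Int.one_le_abs (sub_ne_zero.2 hi)
  have hzero : ∑ j ∈ Finset.univ.erase i, |x j - y j| = 0 := by linarith
  refine ⟨i, by linarith, fun j hj => ?_⟩
  have := (Finset.sum_eq_zero_iff_of_nonneg fun _ _ => abs_nonneg _).1 hzero j (by simp [hj])
  linarith [abs_eq_zero.1 this]

lemma exists_step_toward {p q : ℤ} (h : p ≠ q) :
    ∃ t, |p - t| = 1 ∧ (t - q).natAbs < (p - q).natAbs ∧ t ∈ Set.uIcc p q ∧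
      p ∉ Set.uIcc t q := by
  refine ⟨if p < q then p + 1 else p - 1, ?_⟩
  simp only [Set.mem_uIcc]
  split_ifs <;> refine ⟨?_, by omega, by omega, by omega⟩ <;> simp

lemma mem_uIcc_pi_iff {v a b : V d} : v ∈ Set.uIcc a b ↔ ∀ i, v i ∈ Set.uIcc (a i) (b i) := by
  rw [← Set.pi_univ_uIcc, Set.mem_univ_pi]

lemma exists_path_mem_uIcc (a b : V d) :
    ∃ γ : List (V d), γ.IsChain adj ∧ γ.head? = some a ∧ γ.getLast? = some b ∧ γ.Nodup ∧
      ∀ v ∈ γ, v ∈ Set.uIcc a b := by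
  induction h : ∑ i, (a i - b i).natAbs using Nat.strong_induction_on generalizing a with
  | _ n ih =>
  by_cases hab : a = b
  · subst hab
    exact ⟨[a], by simp, rfl, rfl, by simp, by simp⟩
  obtain ⟨i, hi⟩ : ∃ i, a i ≠ b i := Function.ne_iff.1 hab
  obtain ⟨t, hstep, hcloser, hbetween, hnot⟩ := exists_step_toward hi
  set a' := Function.update a i t
  have ha' : a' ∈ Set.uIcc a b := mem_uIcc_pi_iff.2 fun j => by
    rcases eq_or_ne j i with rfl | hj
    · simpa [a'] using hbetween
    · simp [a', Function.update_of_ne hj]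
  have hlt : ∑ j, (a' j - b j).natAbs < n := h ▸ Finset.sum_lt_sum
    (fun j _ => by
      rcases eq_or_ne j i with rfl | hj
      · simpa [a'] using hcloser.le
      · simp [a', Function.update_of_ne hj])
    ⟨i, Finset.mem_univ i, by simpa [a'] using hcloser⟩
  obtain ⟨γ, hc, hh, hl, hnd, hmem⟩ := ih _ hlt a' rfl
  obtain ⟨r, rfl⟩ := List.head?_eq_some_iff.1 hh
  refine ⟨a :: a' :: r, List.isChain_cons_cons.2 ⟨adj_update hstep, hc⟩, rfl,
    by rwa [List.getLast?_cons_cons], List.nodup_cons.2 ⟨fun ha => ?_, hnd⟩, fun v hv => ?_⟩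
  · exact hnot (by simpa [a'] using mem_uIcc_pi_iff.1 (hmem a ha) i)
  · rcases List.mem_cons.1 hv with rfl | hv
    · exact Set.left_mem_uIcc
    · exact Set.uIcc_subset_uIcc ha' Set.right_mem_uIcc (hmem v hv)

noncomputable def box (c : Fin d → ℝ) (R : ℝ) : Finset (V d) :=
  Finset.Icc (fun i => ⌈c i - R⌉) (fun i => ⌊c i + R⌋)

lemma mem_box {c : Fin d → ℝ} {R : ℝ} {v : V d} : v ∈ box c R ↔ ∀ i, |(v i : ℝ) - c i| ≤ R := by
  simp only [box, Finset.mem_Icc, Pi.le_def, Int.ceil_le, Int.le_floor, abs_le]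
  constructor
  · rintro ⟨h₁, h₂⟩ i
    constructor <;> linarith [h₁ i, h₂ i]
  · intro h
    exact ⟨fun i => by linarith [h i], fun i => by linarith [h i]⟩

lemma Dbox_eq_box (κ δ : ℝ) (n : ℕ) (c : Fin d → ℝ) :
    Dbox κ δ n c = box c (3 ^ d * κ⁻¹ * (n : ℝ) ^ δ) := by
  ext v
  simp [Dbox, mem_box]

lemma card_box_le (c : Fin d → ℝ) {R : ℝ} (hR : 0 ≤ R) :
    ((box c R).card : ℝ) ≤ (2 * R + 1) ^ d := by
  rw [box, Pi.card_Icc, Nat.cast_prod]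
  calc ∏ i, ((Finset.Icc ⌈c i - R⌉ ⌊c i + R⌋).card : ℝ) ≤ ∏ _i : Fin d, (2 * R + 1) := by
        refine Finset.prod_le_prod (fun _ _ => Nat.cast_nonneg _) fun i _ => ?_
        rw [Int.card_Icc, ← Int.cast_natCast, Int.toNat_eq_max]
        have h₁ := Int.floor_le (c i + R)
        have h₂ := Int.le_ceil (c i - R)
        push_cast
        exact max_le (by linarith) (by linarith)
    _ = (2 * R + 1) ^ d := by simp

lemma exists_path_in_box {c : Fin d → ℝ} {R : ℝ} {a b : V d} (ha : a ∈ box c R)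
    (hb : b ∈ box c R) :
    ∃ γ : List (V d), γ.IsChain adj ∧ γ.head? = some a ∧ γ.getLast? = some b ∧ γ.Nodup ∧
      ∀ v ∈ γ, v ∈ box c R := by
  obtain ⟨γ, hγ, hh, hl, hnd, hmem⟩ := exists_path_mem_uIcc a b
  exact ⟨γ, hγ, hh, hl, hnd, fun v hv => Finset.mem_Icc.2 <|
    Set.uIcc_subset_Icc (Finset.mem_Icc.1 ha) (Finset.mem_Icc.1 hb) (hmem v hv)⟩

def forwardEdges (S : Finset (V d)) : Finset (Sym2 (V d)) :=
  (S ×ˢ Finset.univ).image fun p : V d × Fin d => s(p.1, Function.update p.1 p.2 (p.1 p.2 + 1))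

lemma isEdge_of_mem_forwardEdges {S : Finset (V d)} {e : Sym2 (V d)} (he : e ∈ forwardEdges S) :
    IsEdge e := by
  obtain ⟨p, -, rfl⟩ := Finset.mem_image.1 he
  exact ⟨p.1, _, adj_update (by simp), rfl⟩

lemma mk_mem_forwardEdges {S : Finset (V d)} {x y : V d} (hxy : adj x y) (hx : x ∈ S)
    (hy : y ∈ S) : s(x, y) ∈ forwardEdges S := by
  obtain ⟨i, h1, hrest⟩ := exists_abs_sub_eq_one_of_adj hxy
  rcases (abs_eq zero_le_one).1 h1 with h | h
  · have hx' : x = Function.update y i (y i + 1) :=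
      Function.eq_update_iff.2 ⟨by omega, hrest⟩
    refine Finset.mem_image.2 ⟨(y, i), Finset.mem_product.2 ⟨hy, Finset.mem_univ i⟩, ?_⟩
    rw [Sym2.eq_swap, ← hx']
  · have hy' : y = Function.update x i (x i + 1) :=
      Function.eq_update_iff.2 ⟨by omega, fun j hj => (hrest j hj).symm⟩
    exact Finset.mem_image.2 ⟨(x, i), Finset.mem_product.2 ⟨hx, Finset.mem_univ i⟩, by rw [← hy']⟩

lemma card_forwardEdges_le (S : Finset (V d)) : (forwardEdges S).card ≤ S.card * d :=
  Finset.card_image_le.trans (by simp)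

lemma pathCost_le_sum_forwardEdges {w : Cfg d} (hw : ∀ e, IsEdge e → 0 ≤ w e)
    {S : Finset (V d)} {γ : List (V d)} (hγ : γ.IsChain adj) (hnd : γ.Nodup)
    (hS : ∀ v ∈ γ, v ∈ S) : pathCost w γ ≤ ∑ e ∈ forwardEdges S, w e := by
  refine pathCost_le_sum_of_subset (fun e he => hw e (isEdge_of_mem_forwardEdges he)) hnd
    fun e he => ?_
  obtain ⟨u, v, huv, rfl⟩ := exists_infix_of_mem_edgeList he
  exact mk_mem_forwardEdges (List.isChain_pair.1 (hγ.infix huv))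
    (hS u (huv.subset (by simp))) (hS v (huv.subset (by simp)))

lemma card_forwardEdges_box_le (c : Fin d → ℝ) {K δ : ℝ} {m : ℕ} (hK : 0 ≤ K) (hδ : 0 ≤ δ)
    (hm : 1 ≤ m) :
    ((forwardEdges (box c (K * (m : ℝ) ^ δ))).card : ℝ) ≤
      d * (2 * K + 1) ^ d * (m : ℝ) ^ ((d : ℝ) * δ) := by
  have hmδ : 1 ≤ (m : ℝ) ^ δ := Real.one_le_rpow (by exact_mod_cast hm) hδ
  have hR : 0 ≤ K * (m : ℝ) ^ δ := by positivity
  calc ((forwardEdges (box c (K * (m : ℝ) ^ δ))).card : ℝ)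
      ≤ (box c (K * (m : ℝ) ^ δ)).card * d := by exact_mod_cast card_forwardEdges_le _
    _ ≤ (2 * (K * (m : ℝ) ^ δ) + 1) ^ d * d := by gcongr; exact card_box_le c hR
    _ ≤ ((2 * K + 1) * (m : ℝ) ^ δ) ^ d * d := by gcongr; nlinarith
    _ = d * (2 * K + 1) ^ d * (m : ℝ) ^ ((d : ℝ) * δ) := by
      rw [mul_pow, ← Real.rpow_natCast ((m : ℝ) ^ δ), ← Real.rpow_mul (Nat.cast_nonneg m),
        mul_comm δ]
      ring

end LatticeGeometry

section PassageTimes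

variable {w : Cfg d} {A B : Set (V d)}

lemma fpt_nonneg (hw : ∀ e, IsEdge e → 0 ≤ w e) : 0 ≤ fpt w A B :=
  Real.sInf_nonneg <| by
    rintro _ ⟨γ, hγ, -, rfl⟩
    exact pathCost_nonneg hw γ hγ

lemma fpt_le_pathCost (hw : ∀ e, IsEdge e → 0 ≤ w e) {γ : List (V d)} (hγ : γ.IsChain adj)
    (hc : connects γ A B) : fpt w A B ≤ pathCost w γ :=
  csInf_le ⟨0, by rintro _ ⟨γ, hγ, -, rfl⟩; exact pathCost_nonneg hw γ hγ⟩ ⟨γ, hγ, hc, rfl⟩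

lemma le_fpt {t : ℝ} (hne : ∃ γ : List (V d), γ.IsChain adj ∧ connects γ A B)
    (h : ∀ γ : List (V d), γ.IsChain adj → connects γ A B → t ≤ pathCost w γ) :
    t ≤ fpt w A B := by
  obtain ⟨γ, hγ, hc⟩ := hne
  exact le_csInf ⟨_, γ, hγ, hc, rfl⟩ (by rintro _ ⟨γ, hγ, hc, rfl⟩; exact h γ hγ hc)

lemma pt_le_fpt_add (hw : ∀ e, IsEdge e → 0 ≤ w e) {x y : V d} {cA cB : ℝ}
    (hne : ∃ γ : List (V d), γ.IsChain adj ∧ connects γ A B)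
    (hA : ∀ a ∈ A, ∃ γ : List (V d), γ.IsChain adj ∧ γ.head? = some x ∧ γ.getLast? = some a ∧
      pathCost w γ ≤ cA)
    (hB : ∀ b ∈ B, ∃ γ : List (V d), γ.IsChain adj ∧ γ.head? = some b ∧ γ.getLast? = some y ∧
      pathCost w γ ≤ cB) :
    pt w x y ≤ fpt w A B + cA + cB := by
  suffices pt w x y - cA - cB ≤ fpt w A B by linarith
  refine le_fpt hne fun γ hγ ⟨⟨a, ha, hγa⟩, ⟨b, hb, hγb⟩⟩ => ?_
  obtain ⟨γa, ca, hxa, haa, hcosta⟩ := hA a ha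
  obtain ⟨γb, cb, hbb, hyb, hcostb⟩ := hB b hb
  obtain ⟨γ₁, c₁, h₁, l₁, cost₁⟩ := exists_isChain_append w haa hγa ca hγ
  obtain ⟨γ₂, c₂, h₂, l₂, cost₂⟩ := exists_isChain_append w (l₁.trans hγb) hbb c₁ cb
  have := fpt_le_pathCost (A := {x}) (B := {y}) hw c₂
    ⟨⟨x, rfl, h₂.trans (h₁.trans hxa)⟩, ⟨y, rfl, l₂.trans hyb⟩⟩
  unfold pt
  linarith

lemma pt_le_fpt_box_add (hw : ∀ e, IsEdge e → 0 ≤ w e) {c₁ c₂ : Fin d → ℝ} {R : ℝ} {x y : V d}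
    (hx : x ∈ box c₁ R) (hy : y ∈ box c₂ R) :
    pt w x y ≤ fpt w (box c₁ R) (box c₂ R) + ∑ e ∈ forwardEdges (box c₁ R), w e +
      ∑ e ∈ forwardEdges (box c₂ R), w e := by
  refine pt_le_fpt_add hw ?_ (fun a ha => ?_) (fun b hb => ?_)
  · obtain ⟨γ, hγ, hh, hl, -⟩ := exists_path_mem_uIcc x y
    exact ⟨γ, hγ, ⟨x, hx, hh⟩, ⟨y, hy, hl⟩⟩
  · obtain ⟨γ, hγ, hh, hl, hnd, hmem⟩ := exists_path_in_box hx ha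
    exact ⟨γ, hγ, hh, hl, pathCost_le_sum_forwardEdges hw hγ hnd hmem⟩
  · obtain ⟨γ, hγ, hh, hl, hnd, hmem⟩ := exists_path_in_box hb hy
    exact ⟨γ, hγ, hh, hl, pathCost_le_sum_forwardEdges hw hγ hnd hmem⟩

end PassageTimes

section Expectations

variable {P : Measure (Cfg d)} {ν : Measure ℝ}

lemma ae_nonneg_of_measure_Iio_eq_zero (hνpos : ν (Set.Iio 0) = 0) : ∀ᵐ t ∂ν, 0 ≤ t :=
  ae_iff.2 (by simp only [not_le]; exact hνpos)

lemma integrable_id_of_integrable_rpow [IsFiniteMeasure ν] (hνpos : ν (Set.Iio 0) = 0) {α : ℝ}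
    (hα : 1 ≤ α) (hA2 : Integrable (fun t : ℝ => t ^ α) ν) : Integrable (fun t : ℝ => t) ν := by
  refine ((integrable_const 1).add hA2).mono' measurable_id.aestronglyMeasurable ?_
  filter_upwards [ae_nonneg_of_measure_Iio_eq_zero hνpos] with t ht
  rw [Real.norm_eq_abs, abs_of_nonneg ht, Pi.add_apply]
  rcases le_or_gt t 1 with h | h
  · linarith [Real.rpow_nonneg ht α]
  · linarith [Real.self_le_rpow_of_one_le h.le hα]

lemma ae_forall_isEdge_nonneg (hmap : ∀ e, IsEdge e → P.map (fun w => w e) = ν)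
    (hνpos : ν (Set.Iio 0) = 0) : ∀ᵐ w ∂P, ∀ e, IsEdge e → 0 ≤ w e := by
  rw [ae_all_iff]
  intro e
  by_cases he : IsEdge e
  · have h := ae_of_ae_map (measurable_pi_apply e).aemeasurable
      ((hmap e he).symm ▸ ae_nonneg_of_measure_Iio_eq_zero hνpos)
    filter_upwards [h] with w hw
    exact fun _ => hw
  · exact ae_of_all _ fun _ h => absurd h he

lemma integrable_eval [IsProbabilityMeasure P] {e : Sym2 (V d)}
    (hmap : P.map (fun w => w e) = ν) (hνpos : ν (Set.Iio 0) = 0) {α : ℝ} (hα : 1 ≤ α)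
    (hA2 : Integrable (fun t : ℝ => t ^ α) ν) : Integrable (fun w : Cfg d => w e) P := by
  have hm : AEMeasurable (fun w : Cfg d => w e) P := (measurable_pi_apply e).aemeasurable
  subst hmap
  have := Measure.isProbabilityMeasure_map hm
  exact (integrable_map_measure measurable_id.aestronglyMeasurable hm).1
    (integrable_id_of_integrable_rpow hνpos hα hA2)

lemma integral_eval {e : Sym2 (V d)} (hmap : P.map (fun w => w e) = ν) :
    ∫ w, w e ∂P = ∫ t, t ∂ν := by
  have hm : Measurable fun w : Cfg d => w e := measurable_pi_apply e
  rw [← hmap]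
  exact (integral_map hm.aemeasurable measurable_id.aestronglyMeasurable).symm

lemma measurable_pathCost : ∀ γ : List (V d), Measurable fun w : Cfg d => pathCost w γ
  | [] | [_] => measurable_const
  | x :: y :: r => (measurable_pi_apply s(x, y)).add (measurable_pathCost (y :: r))

lemma measurable_fpt (A B : Set (V d)) : Measurable fun w : Cfg d => fpt w A B := by
  have h : ∀ w : Cfg d, fpt w A B =
      sInf ((fun γ => pathCost w γ) '' {γ : List (V d) | γ.IsChain adj ∧ connects γ A B}) := by
    intro w
    simp only [fpt, Set.image, Set.mem_ofPred_eq, and_assoc]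
    rfl
  simp_rw [h]
  exact Measurable.sInf (Set.to_countable _) fun γ _ => measurable_pathCost γ

lemma integrable_pathCost (hint : ∀ e, IsEdge e → Integrable (fun w : Cfg d => w e) P) :
    ∀ γ : List (V d), γ.IsChain adj → Integrable (fun w : Cfg d => pathCost w γ) P
  | [], _ | [_], _ => integrable_zero _ _ _
  | x :: y :: r, h => by
    obtain ⟨hxy, h⟩ := List.isChain_cons_cons.1 h
    exact (hint _ ⟨x, y, hxy, rfl⟩).add (integrable_pathCost hint (y :: r) h)

lemma integrable_fpt (hint : ∀ e, IsEdge e → Integrable (fun w : Cfg d => w e) P)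
    (hnn : ∀ᵐ w ∂P, ∀ e, IsEdge e → 0 ≤ w e) {A B : Set (V d)} {γ : List (V d)}
    (hγ : γ.IsChain adj) (hc : connects γ A B) : Integrable (fun w => fpt w A B) P := by
  refine (integrable_pathCost hint γ hγ).mono' (measurable_fpt A B).aestronglyMeasurable ?_
  filter_upwards [hnn] with w hw
  rw [Real.norm_eq_abs, abs_of_nonneg (fpt_nonneg hw)]
  exact fpt_le_pathCost hw hγ hc

lemma integral_pt_le_integral_fpt_box_add [IsProbabilityMeasure P]
    (hmap : ∀ e, IsEdge e → P.map (fun w => w e) = ν) (hνpos : ν (Set.Iio 0) = 0) {α : ℝ}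
    (hα : 1 ≤ α) (hA2 : Integrable (fun t : ℝ => t ^ α) ν) {c₁ c₂ : Fin d → ℝ} {R : ℝ}
    {x y : V d} (hx : x ∈ box c₁ R) (hy : y ∈ box c₂ R) :
    ∫ w, pt w x y ∂P ≤ ∫ w, fpt w (box c₁ R) (box c₂ R) ∂P +
      ((forwardEdges (box c₁ R)).card + (forwardEdges (box c₂ R)).card) * ∫ t, t ∂ν := by
  have hint e (he : IsEdge e) := integrable_eval (hmap e he) hνpos hα hA2
  have hnn := ae_forall_isEdge_nonneg hmap hνpos
  obtain ⟨γ, hγ, hh, hl, -⟩ := exists_path_mem_uIcc x y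
  have hsum (S : Finset (V d)) : Integrable (fun w : Cfg d => ∑ e ∈ forwardEdges S, w e) P ∧
      ∫ w, ∑ e ∈ forwardEdges S, w e ∂P = (forwardEdges S).card * ∫ t, t ∂ν := by
    refine ⟨integrable_finsetSum _ fun e he => hint e (isEdge_of_mem_forwardEdges he), ?_⟩
    rw [integral_finsetSum _ fun e he => hint e (isEdge_of_mem_forwardEdges he),
      Finset.sum_congr rfl fun e he => integral_eval (hmap e (isEdge_of_mem_forwardEdges he)),
      Finset.sum_const, nsmul_eq_mul]
  have hfpt := integrable_fpt (A := box c₁ R) (B := box c₂ R) hint hnn hγ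
    ⟨⟨x, hx, hh⟩, ⟨y, hy, hl⟩⟩
  calc ∫ w, pt w x y ∂P
      ≤ ∫ w, (fpt w (box c₁ R) (box c₂ R) + ∑ e ∈ forwardEdges (box c₁ R), w e +
          ∑ e ∈ forwardEdges (box c₂ R), w e) ∂P :=
        integral_mono_ae (integrable_fpt hint hnn hγ ⟨⟨x, rfl, hh⟩, ⟨y, rfl, hl⟩⟩)
          ((hfpt.add (hsum _).1).add (hsum _).1)
          (by filter_upwards [hnn] with w hw using pt_le_fpt_box_add hw hx hy)
    _ = _ := by
      rw [integral_add ?_ (hsum _).1, integral_add hfpt (hsum _).1, (hsum _).2, (hsum _).2]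
      · ring
      · exact hfpt.add (hsum _).1

end Expectations

lemma unitVec_div_sqrt {u : Fin d → ℝ} (hu : ∑ i, u i ^ 2 ≠ 0) :
    unitVec fun i => u i / √(∑ j, u j ^ 2) := by
  have hnn : 0 ≤ ∑ j, u j ^ 2 := Finset.sum_nonneg fun _ _ => sq_nonneg _
  simp only [unitVec, div_pow, Real.sq_sqrt hnn, ← Finset.sum_div, div_self hu]

lemma mem_box_smul_div_sqrt {u : V d} {m R : ℝ} (hR : 1 ≤ R)
    (hm : m ≤ √(∑ j, (u j : ℝ) ^ 2)) (hm' : √(∑ j, (u j : ℝ) ^ 2) ≤ m + 1) :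
    u ∈ box (m • fun i => (u i : ℝ) / √(∑ j, (u j : ℝ) ^ 2)) R := by
  set s := √(∑ j, (u j : ℝ) ^ 2)
  refine mem_box.2 fun i => le_trans ?_ hR
  have hui : |(u i : ℝ)| ≤ s := Real.abs_le_sqrt <|
    Finset.single_le_sum (f := fun j => (u j : ℝ) ^ 2) (fun j _ => sq_nonneg _) (Finset.mem_univ i)
  rcases (abs_nonneg _).trans hui |>.eq_or_lt with hs | hs
  · rw [← hs] at hui ⊢
    simp [abs_nonpos_iff.1 hui]
  · rw [Pi.smul_apply, smul_eq_mul, show (u i : ℝ) - m * (u i / s) = u i / s * (s - m) by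
      field_simp, abs_mul, abs_of_nonneg (sub_nonneg.2 hm)]
    have : |(u i : ℝ) / s| ≤ 1 := by
      rw [abs_div, abs_of_pos hs]
      exact div_le_one_of_le₀ hui hs.le
    nlinarith [abs_nonneg ((u i : ℝ) / s)]

theorem statement10_general (d : ℕ)
    (ν : Measure ℝ) (hνpos : ν (Set.Iio 0) = 0)
    (α : ℝ) (hα : 1 < α) (hA2 : Integrable (fun t : ℝ => t ^ α) ν)
    (P : Measure (Cfg d)) (hP : IID d P ν)
    (κ : ℝ) (hκ : κ ∈ Set.Ioo (0 : ℝ) 1)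
    (δ : ℝ) (hδ0 : 0 < δ)
    (C3 C4 : ℝ)
    (hLem : ∀ η : Fin d → ℝ, unitVec η → ∀ m : ℕ,
      |(∫ w, fpt w (Dbox κ δ m 0) (Dbox κ δ m ((m : ℝ) • η)) ∂P) -
        ∫ w, fpt (tw κ ((m : ℝ) ^ δ) w)
          (Dbox κ δ m 0) (Dbox κ δ m ((m : ℝ) • η)) ∂P|
        ≤ C3 * m * Real.exp (-C4 * (m : ℝ) ^ δ)) :
    ∃ C9 > (0 : ℝ), ∃ m0 : ℕ, ∀ (M : ℕ) (U : V d), (∃ i, (M : ℤ) ≤ |U i|) →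
      ∀ m : ℕ, m = ⌊Real.sqrt (∑ i, (U i : ℝ) ^ 2)⌋₊ → m0 ≤ m →
        ∫ w, pt w 0 U ∂P ≤
          (∫ w, fpt (tw κ ((m : ℝ) ^ δ) w) (Dbox κ δ m 0)
            (Dbox κ δ m ((m : ℝ) • fun i => (U i : ℝ) / Real.sqrt (∑ j, (U j : ℝ) ^ 2))) ∂P)
          + C3 * m * Real.exp (-C4 * (m : ℝ) ^ δ) + C9 * (m : ℝ) ^ ((d : ℝ) * δ) := by
  have := hP.1
  simp only [Dbox_eq_box] at hLem ⊢
  set K : ℝ := 3 ^ d * κ⁻¹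
  have hK : 1 ≤ K := one_le_mul_of_one_le_of_one_le (one_le_pow₀ (by norm_num))
    ((one_le_inv₀ hκ.1).2 hκ.2.le)
  set μ := ∫ t, t ∂ν
  have hμ : 0 ≤ μ := integral_nonneg_of_ae (ae_nonneg_of_measure_Iio_eq_zero hνpos)
  refine ⟨(2 * K + 1) ^ d * (2 * d * μ + 1), mul_pos (pow_pos (by linarith) d) (by positivity),
    1, fun _ U _ m hm hm1 => ?_⟩
  set s := √(∑ i, (U i : ℝ) ^ 2)
  have hms : (m : ℝ) ≤ s := hm ▸ Nat.floor_le (Real.sqrt_nonneg _)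
  have hsm : s < m + 1 := hm ▸ Nat.lt_floor_add_one _
  have hs : 0 < s := by linarith [(Nat.one_le_cast (α := ℝ)).2 hm1]
  have hR : 1 ≤ K * (m : ℝ) ^ δ :=
    one_le_mul_of_one_le_of_one_le hK (Real.one_le_rpow (by exact_mod_cast hm1) hδ0.le)
  have h0 : (0 : V d) ∈ box 0 (K * (m : ℝ) ^ δ) := mem_box.2 fun i => by simp; linarith
  have hE := integral_pt_le_integral_fpt_box_add hP.2.1 hνpos hα.le hA2 h0
    (mem_box_smul_div_sqrt hR hms hsm.le)
  have hη := unitVec_div_sqrt (u := fun i => (U i : ℝ)) (Real.sqrt_pos.1 hs).ne'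
  have hσ := (abs_le.1 (hLem _ hη m)).2
  have hK0 : 0 ≤ K := by linarith
  have h₁ := card_forwardEdges_box_le (0 : Fin d → ℝ) hK0 hδ0.le hm1
  have h₂ := card_forwardEdges_box_le ((m : ℝ) • fun i => (U i : ℝ) / s) hK0 hδ0.le hm1
  have hX : 0 ≤ (2 * K + 1) ^ d * (m : ℝ) ^ ((d : ℝ) * δ) :=
    mul_nonneg (pow_nonneg (by linarith) d) (Real.rpow_nonneg (Nat.cast_nonneg m) _)
  linarith [mul_le_mul_of_nonneg_right h₁ hμ, mul_le_mul_of_nonneg_right h₂ hμ]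

/-- for `U ∈ ℤ^d` with `M ≤ |U|_∞`, `η := U/|U|` and `m := ⌊|U|⌋`, for
all large `m` there is a constant `C₉ > 0` with
`E[T(0,U)] ≤ E[T_σ(D_m(0), D_m(mη))] + C̃₃ m exp(−C̃₄ m^δ) + C₉ m^{dδ}`, where `C̃₃, C̃₄`
are the constants of Lemma 2.2. -/
theorem statement10 (d : ℕ) (hd : 2 ≤ d)
    (ν : Measure ℝ) (hνprob : IsProbabilityMeasure ν) (hνpos : ν (Set.Iio 0) = 0)
    (α : ℝ) (hα : 1 < α) (hA2 : Integrable (fun t : ℝ => t ^ α) ν)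
    (hA1 : (ν {0}).toReal < pc d)
    (P : Measure (Cfg d)) (hP : IID d P ν)
    (κ : ℝ) (hκ : κ ∈ Set.Ioo (0 : ℝ) 1)
    (hκpc : max (ν (Set.Iio κ)).toReal (ν (Set.Ioi κ⁻¹)).toReal < pc d)
    (δ : ℝ) (hδ0 : 0 < δ) (hδ : δ < 1 / d)
    (C3 C4 : ℝ) (hC3 : 0 < C3) (hC4 : 0 < C4)
    (hLem : ∀ η : Fin d → ℝ, unitVec η → ∀ m : ℕ,
      |(∫ w, fpt w (Dbox κ δ m 0) (Dbox κ δ m ((m : ℝ) • η)) ∂P) -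
        ∫ w, fpt (tw κ ((m : ℝ) ^ δ) w)
          (Dbox κ δ m 0) (Dbox κ δ m ((m : ℝ) • η)) ∂P|
        ≤ C3 * m * Real.exp (-C4 * (m : ℝ) ^ δ)) :
    ∃ C9 > (0 : ℝ), ∃ m0 : ℕ, ∀ (M : ℕ) (U : V d), (∃ i, (M : ℤ) ≤ |U i|) →
      ∀ m : ℕ, m = ⌊Real.sqrt (∑ i, (U i : ℝ) ^ 2)⌋₊ → m0 ≤ m →
        ∫ w, pt w 0 U ∂P ≤
          (∫ w, fpt (tw κ ((m : ℝ) ^ δ) w) (Dbox κ δ m 0)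
            (Dbox κ δ m ((m : ℝ) • fun i => (U i : ℝ) / Real.sqrt (∑ j, (U j : ℝ) ^ 2))) ∂P)
          + C3 * m * Real.exp (-C4 * (m : ℝ) ^ δ) + C9 * (m : ℝ) ^ ((d : ℝ) * δ) :=
  statement10_general d ν hνpos α hα hA2 P hP κ hκ δ hδ0 C3 C4 hLem

end FPP
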